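/- arXiv:2107.00321 — 2 statements merged into one kernel-verified Lean document; each statement's English description precedes it below -/
import Mathlib

section
/- Let P be a Poisson polynomial algebra P_n = K[x₁,…,x_n] with c_{ij} = {x_i,x_j}. Define in the semidirect-product setting the elements t_i and the bracket [t_i, t_j] = ∑_k (∂c_{ij}/∂x_k) t_k, [t_i, p] = {x_i, p} for p ∈ P_n. Then G' = P_n ⊕ ⨁_{i=1}^n P_n t_i is a Lie algebra over K under these brackets extended by [p t_i, q t_j] = p{x_i,q}t_j − q{x_j,p}t_i + pq ∑_k (∂c_{ij}/∂x_k) t_k and [p t_i, q] = p{x_i, q}, with P_n an abelian Lie ideal. -/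
open MvPolynomial

/-- A Poisson bracket on a commutative `K`-algebra `P`. -/
def IsPoissonBracket (K : Type*) {P : Type*} [Field K] [CommRing P] [Algebra K P]
    (b : P →ₗ[K] P →ₗ[K] P) : Prop :=
  (∀ a, b a a = 0) ∧
  (∀ a x y, b a (b x y) = b (b a x) y + b x (b a y)) ∧
  (∀ a x y, b a (x * y) = b a x * y + x * b a y)

/-- The bracket on `G' = P_n ⊕ ⨁ P_n t_i` (an element `(p, q)` represents
`p + ∑_i q_i t_i`) determined by `[t_i, t_j] = ∑_k (∂c_{ij}/∂x_k) t_k`,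
`[t_i, p] = {x_i, p}`, extended by
`[p t_i, q t_j] = p{x_i,q} t_j − q{x_j,p} t_i + pq ∑_k (∂c_{ij}/∂x_k) t_k` and
`[p t_i, q] = p {x_i, q}`. -/
noncomputable def gBracket (K : Type*) [Field K] (n : ℕ)
    (b : MvPolynomial (Fin n) K →ₗ[K] MvPolynomial (Fin n) K →ₗ[K] MvPolynomial (Fin n) K) :
    (MvPolynomial (Fin n) K × (Fin n → MvPolynomial (Fin n) K)) →
    (MvPolynomial (Fin n) K × (Fin n → MvPolynomial (Fin n) K)) →
    MvPolynomial (Fin n) K × (Fin n → MvPolynomial (Fin n) K) :=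
  fun m m' =>
    (∑ i, m.2 i * b (X i) m'.1 - ∑ j, m'.2 j * b (X j) m.1,
     fun k =>
       ∑ i, m.2 i * b (X i) (m'.2 k) - ∑ j, m'.2 j * b (X j) (m.2 k)
         + ∑ i, ∑ j, m.2 i * m'.2 j * pderiv k (b (X i) (X j)))

/-!
`G'` is a Lie–Rinehart algebra over `P_n` with anchor `ρ(p + ∑ qᵢ tᵢ) = ∑ qᵢ {xᵢ, ·}`: the
bracket satisfies `[x, a • y] = a • [x, y] + ρ(x)(a) • y`, and `ρ` sends brackets to
commutators of derivations because `[{xᵢ, ·}, {xⱼ, ·}] = {c_ij, ·} = ∑ₖ ∂ₖc_ij {xₖ, ·}`.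
Together these make the Jacobiator `P_n`-trilinear, so it suffices to check it on the basis
`1, t₁, …, t_n`. Triples containing `1` vanish because `{xᵢ, 1} = 0`. Since
`[tᵢ, ∑ₖ ∂ₖf tₖ] = ∑ₖ ∂ₖ{xᵢ, f} tₖ`, the Jacobiator of `tᵢ, tⱼ, t_l` is the gradient of the
Jacobi sum `{xᵢ, {xⱼ, x_l}} + {xⱼ, {x_l, xᵢ}} + {x_l, {xᵢ, xⱼ}} = 0`.
-/

theorem Derivation.finset_sum_apply {R A M ι : Type*} [CommSemiring R] [CommSemiring A]
    [AddCommMonoid M] [Algebra R A] [Module A M] [Module R M] (s : Finset ι)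
    (D : ι → Derivation R A M) (a : A) : (∑ i ∈ s, D i) a = ∑ i ∈ s, D i a := by
  classical
  induction s using Finset.induction_on with
  | empty => rfl
  | insert i s hi ih => rw [Finset.sum_insert hi, Finset.sum_insert hi, Derivation.add_apply, ih]

theorem Derivation.lie_smul_smul {R A : Type*} [CommRing R] [CommRing A] [Algebra R A]
    (a a' : A) (D D' : Derivation R A A) :
    ⁅a • D, a' • D'⁆ = (a * D a') • D' - (a' * D' a) • D + (a * a') • ⁅D, D'⁆ := by
  ext f
  simp only [Derivation.commutator_apply, Derivation.smul_apply, Derivation.sub_apply,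
    Derivation.add_apply, Derivation.leibniz, smul_eq_mul]
  ring

theorem Finset.sum_sum_mul_mul_eq_zero_of_alternating {ι R : Type*} [Fintype ι] [CommRing R]
    (a : ι → ι → R) (h_diag : ∀ i, a i i = 0) (h_skew : ∀ i j, a j i = -a i j) (u : ι → R) :
    ∑ i, ∑ j, u i * u j * a i j = 0 := by
  rw [← Finset.sum_product']
  refine Finset.sum_involution (fun p _ => p.swap) (fun p _ => ?_) (fun p _ hp h => hp ?_)
    (fun p _ => Finset.mem_univ _) (fun p _ => p.swap_swap)
  · rw [Prod.fst_swap, Prod.snd_swap, h_skew]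
    ring
  · rw [← congrArg Prod.fst h, Prod.fst_swap, h_diag, mul_zero]

namespace MvPolynomial

variable {R σ : Type*} [Fintype σ]

theorem derivation_eq_sum_smul_pderiv [CommSemiring R]
    (D : Derivation R (MvPolynomial σ R) (MvPolynomial σ R)) :
    D = ∑ i, D (X i) • pderiv i :=
  derivation_ext fun j => by
    classical
    simp [Derivation.finset_sum_apply, pderiv_X, Pi.single_apply]

theorem lie_pderiv_eq_sum [CommRing R] (k : σ)
    (D : Derivation R (MvPolynomial σ R) (MvPolynomial σ R)) :
    ⁅(pderiv k : Derivation R (MvPolynomial σ R) (MvPolynomial σ R)), D⁆ =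
      ∑ i, pderiv k (D (X i)) • pderiv i :=
  derivation_ext fun j => by
    classical
    simp [Derivation.commutator_apply, Derivation.finset_sum_apply, pderiv_X, Pi.single_apply,
      apply_ite D]

end MvPolynomial

namespace IsPoissonBracket

section

variable {K P : Type*} [Field K] [CommRing P] [Algebra K P] {b : P →ₗ[K] P →ₗ[K] P}
  (hb : IsPoissonBracket K b)
include hb

theorem skew (x y : P) : b y x = -b x y := by
  have h := hb.1 (x + y)
  simp only [map_add, LinearMap.add_apply, hb.1, zero_add, add_zero] at h
  exact eq_neg_of_add_eq_zero_left h

theorem jacobi_cyclic (x y z : P) : b x (b y z) + b y (b z x) + b z (b x y) = 0 := by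
  rw [hb.2.1 x y z, hb.skew z x, hb.skew (b x y) z, map_neg]
  ring

def hamiltonian (a : P) : Derivation K P P :=
  Derivation.mk' (b a) fun x y => by rw [hb.2.2, smul_eq_mul, smul_eq_mul, mul_comm y]; ring

theorem map_one_right (a : P) : b a 1 = 0 := (hb.hamiltonian a).map_one_eq_zero

@[simp]
theorem hamiltonian_apply (a x : P) : hb.hamiltonian a x = b a x := rfl

theorem lie_hamiltonian (a a' : P) :
    ⁅hb.hamiltonian a, hb.hamiltonian a'⁆ = hb.hamiltonian (b a a') := by
  refine Derivation.ext fun x => ?_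
  rw [Derivation.commutator_apply]
  simp only [hamiltonian_apply, hb.2.1 a a' x]
  ring

end

variable {K σ : Type*} [Field K] [Fintype σ]
  {b : MvPolynomial σ K →ₗ[K] MvPolynomial σ K →ₗ[K] MvPolynomial σ K} (hb : IsPoissonBracket K b)
include hb

theorem hamiltonian_eq_sum (f : MvPolynomial σ K) :
    hb.hamiltonian f = ∑ i, pderiv i f • hb.hamiltonian (X i) := by
  refine Derivation.ext fun g => ?_
  have h := congrArg (· f) (derivation_eq_sum_smul_pderiv (hb.hamiltonian g))
  simp only [Derivation.finset_sum_apply, Derivation.smul_apply, hamiltonian_apply,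
    smul_eq_mul] at h ⊢
  rw [hb.skew, h, ← Finset.sum_neg_distrib]
  exact Finset.sum_congr rfl fun i _ => by rw [hb.skew g]; ring

theorem lie_hamiltonian_X (i j : σ) :
    ⁅hb.hamiltonian (X i), hb.hamiltonian (X j)⁆ =
      ∑ m, pderiv m (b (X i) (X j)) • hb.hamiltonian (X m) := by
  rw [lie_hamiltonian, hamiltonian_eq_sum]

theorem pderiv_bracket_X (k i : σ) (f : MvPolynomial σ K) :
    pderiv k (b (X i) f) = b (X i) (pderiv k f) + ∑ m, pderiv m f * pderiv k (b (X i) (X m)) := by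
  have h := congrArg (· f) (lie_pderiv_eq_sum k (hb.hamiltonian (X i)))
  simp only [Derivation.commutator_apply, Derivation.finset_sum_apply, Derivation.smul_apply,
    hamiltonian_apply, smul_eq_mul] at h
  rw [← sub_eq_iff_eq_add', h]
  exact Finset.sum_congr rfl fun m _ => mul_comm _ _

end IsPoissonBracket

namespace gBracket

variable {K : Type*} [Field K] {n : ℕ}
  {b : MvPolynomial (Fin n) K →ₗ[K] MvPolynomial (Fin n) K →ₗ[K] MvPolynomial (Fin n) K}

local notation "𝔤" => MvPolynomial (Fin n) K × (Fin n → MvPolynomial (Fin n) K)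

theorem add_left (x y z : 𝔤) :
    gBracket K n b (x + y) z = gBracket K n b x z + gBracket K n b y z := by
  refine Prod.ext ?_ (funext fun k => ?_) <;>
  · simp only [gBracket, Prod.fst_add, Prod.snd_add, Pi.add_apply, map_add,
      add_mul, mul_add, Finset.sum_add_distrib]
    ring

theorem add_right (x y z : 𝔤) :
    gBracket K n b x (y + z) = gBracket K n b x y + gBracket K n b x z := by
  refine Prod.ext ?_ (funext fun k => ?_) <;>
  · simp only [gBracket, Prod.fst_add, Prod.snd_add, Pi.add_apply, map_add,
      add_mul, mul_add, Finset.sum_add_distrib]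
    ring

theorem smul_left (c : K) (x y : 𝔤) : gBracket K n b (c • x) y = c • gBracket K n b x y := by
  refine Prod.ext ?_ (funext fun k => ?_) <;>
  · simp only [gBracket, Prod.smul_fst, Prod.smul_snd, Pi.smul_apply, map_smul,
      smul_mul_assoc, mul_smul_comm, Finset.smul_sum, smul_sub, smul_add]

theorem smul_right (c : K) (x y : 𝔤) : gBracket K n b x (c • y) = c • gBracket K n b x y := by
  refine Prod.ext ?_ (funext fun k => ?_) <;>
  · simp only [gBracket, Prod.smul_fst, Prod.smul_snd, Pi.smul_apply, map_smul,
      smul_mul_assoc, mul_smul_comm, Finset.smul_sum, smul_sub, smul_add]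

variable (b) in
noncomputable def bilin : 𝔤 →ₗ[K] 𝔤 →ₗ[K] 𝔤 :=
  LinearMap.mk₂ K (gBracket K n b) add_left smul_left add_right smul_right

theorem neg_left (x y : 𝔤) : gBracket K n b (-x) y = -gBracket K n b x y :=
  (bilin b).map_neg₂ x y

theorem neg_right (x y : 𝔤) : gBracket K n b x (-y) = -gBracket K n b x y :=
  map_neg (bilin b x) y

theorem zero_right (x : 𝔤) : gBracket K n b x 0 = 0 :=
  map_zero (bilin b x)

theorem mk_zero_mk_zero (p p' : MvPolynomial (Fin n) K) :
    gBracket K n b (p, 0) (p', 0) = 0 := by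
  refine Prod.ext ?_ (funext fun k => ?_) <;> simp [gBracket]

theorem snd_mk_zero_right (x : 𝔤) (p : MvPolynomial (Fin n) K) :
    (gBracket K n b x (p, 0)).2 = 0 := by
  funext k
  simp [gBracket]

section

variable (hb : IsPoissonBracket K b)
include hb

theorem self_eq_zero (x : 𝔤) : gBracket K n b x x = 0 := by
  refine Prod.ext (sub_self _) (funext fun k => ?_)
  simp only [gBracket, sub_self, zero_add, Prod.snd_zero, Pi.zero_apply]
  exact Finset.sum_sum_mul_mul_eq_zero_of_alternating _ (fun i => by rw [hb.1, map_zero])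
    (fun i j => by rw [hb.skew, map_neg]) x.2

theorem swap (x y : 𝔤) : gBracket K n b y x = -gBracket K n b x y := by
  have h := self_eq_zero hb (x + y)
  rw [add_left, add_right, add_right, self_eq_zero hb, self_eq_zero hb, zero_add,
    add_zero] at h
  exact eq_neg_of_add_eq_zero_right h

noncomputable def anchor (u : Fin n → MvPolynomial (Fin n) K) :
    Derivation K (MvPolynomial (Fin n) K) (MvPolynomial (Fin n) K) :=
  ∑ i, u i • hb.hamiltonian (X i)

theorem anchor_apply (u : Fin n → MvPolynomial (Fin n) K) (f : MvPolynomial (Fin n) K) :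
    anchor hb u f = ∑ i, u i * b (X i) f := by
  simp [anchor, Derivation.finset_sum_apply]

theorem anchor_smul (a : MvPolynomial (Fin n) K) (u : Fin n → MvPolynomial (Fin n) K) :
    anchor hb (a • u) = a • anchor hb u := by
  simp only [anchor, Finset.smul_sum, Pi.smul_apply, smul_smul, smul_eq_mul]

theorem eq_anchor (x y : 𝔤) :
    gBracket K n b x y =
      (anchor hb x.2 y.1 - anchor hb y.2 x.1, fun k => anchor hb x.2 (y.2 k) -
        anchor hb y.2 (x.2 k) + ∑ i, ∑ j, x.2 i * y.2 j * pderiv k (b (X i) (X j))) := by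
  simp only [gBracket, anchor_apply]

theorem anchor_snd (x y : 𝔤) :
    anchor hb (gBracket K n b x y).2 = ⁅anchor hb x.2, anchor hb y.2⁆ := by
  have h_lie : ⁅anchor hb x.2, anchor hb y.2⁆ =
      ∑ i, ∑ j, (x.2 i * b (X i) (y.2 j)) • hb.hamiltonian (X j) -
        ∑ i, ∑ j, (y.2 j * b (X j) (x.2 i)) • hb.hamiltonian (X i) +
        ∑ i, ∑ j, ∑ m, (x.2 i * y.2 j * pderiv m (b (X i) (X j))) • hb.hamiltonian (X m) := by
    simp only [anchor, sum_lie_sum, Derivation.lie_smul_smul, hb.lie_hamiltonian_X,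
      IsPoissonBracket.hamiltonian_apply, Finset.smul_sum, smul_smul, Finset.sum_add_distrib,
      Finset.sum_sub_distrib]
  rw [h_lie, eq_anchor hb]
  simp only [anchor_apply]
  simp only [anchor, add_smul, sub_smul, Finset.sum_add_distrib, Finset.sum_sub_distrib,
    Finset.sum_smul]
  refine congrArg₂ (· + ·) (congrArg₂ (· - ·) Finset.sum_comm rfl) ?_
  rw [Finset.sum_comm]
  exact Finset.sum_congr rfl fun i _ => Finset.sum_comm

theorem polynomial_smul_right (a : MvPolynomial (Fin n) K) (x y : 𝔤) :
    gBracket K n b x (a • y) = a • gBracket K n b x y + anchor hb x.2 a • y := by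
  refine Prod.ext ?_ (funext fun k => ?_)
  · simp only [eq_anchor hb, Prod.fst_add, Prod.smul_fst, Prod.smul_snd, anchor_smul,
      Derivation.leibniz, Derivation.smul_apply, smul_eq_mul]
    ring
  · have h : ∑ i, ∑ j, x.2 i * (a * y.2 j) * pderiv k (b (X i) (X j)) =
        a * ∑ i, ∑ j, x.2 i * y.2 j * pderiv k (b (X i) (X j)) := by
      simp only [Finset.mul_sum]
      exact Finset.sum_congr rfl fun i _ => Finset.sum_congr rfl fun j _ => by ring
    simp only [eq_anchor hb, Prod.snd_add, Prod.smul_fst, Prod.smul_snd, Pi.add_apply,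
      Pi.smul_apply, anchor_smul, Derivation.leibniz, Derivation.smul_apply, smul_eq_mul, h]
    ring

end

variable (b) in
noncomputable def jacobiator (x y z : 𝔤) : 𝔤 :=
  gBracket K n b x (gBracket K n b y z) - gBracket K n b (gBracket K n b x y) z -
    gBracket K n b y (gBracket K n b x z)

theorem jacobiator_add_right (x y z z' : 𝔤) :
    jacobiator b x y (z + z') = jacobiator b x y z + jacobiator b x y z' := by
  simp only [jacobiator, add_right]
  abel

section

variable (hb : IsPoissonBracket K b)
include hb

theorem jacobiator_swap_left (x y z : 𝔤) : jacobiator b y x z = -jacobiator b x y z := by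
  simp only [jacobiator, swap hb y x, neg_left]
  abel

theorem jacobiator_swap_right (x y z : 𝔤) : jacobiator b x z y = -jacobiator b x y z := by
  simp only [jacobiator, swap hb z y, neg_right, swap hb _ y, swap hb z]
  abel

theorem jacobiator_cycle (x y z : 𝔤) : jacobiator b y z x = jacobiator b x y z := by
  rw [jacobiator_swap_right hb, jacobiator_swap_left hb, neg_neg]

theorem jacobiator_smul_right (a : MvPolynomial (Fin n) K) (x y z : 𝔤) :
    jacobiator b x y (a • z) = a • jacobiator b x y z := by
  simp only [jacobiator, polynomial_smul_right hb, add_right, anchor_snd hb,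
    Derivation.commutator_apply]
  module

theorem jacobiator_add_left (x x' y z : 𝔤) :
    jacobiator b (x + x') y z = jacobiator b x y z + jacobiator b x' y z := by
  simp only [← jacobiator_cycle hb _ y z, jacobiator_add_right]

theorem jacobiator_smul_left (a : MvPolynomial (Fin n) K) (x y z : 𝔤) :
    jacobiator b (a • x) y z = a • jacobiator b x y z := by
  simp only [← jacobiator_cycle hb _ y z, jacobiator_smul_right hb]

theorem jacobiator_add_mid (x y y' z : 𝔤) :
    jacobiator b x (y + y') z = jacobiator b x y z + jacobiator b x y' z := by
  simp only [jacobiator_cycle hb z x, jacobiator_add_right]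

theorem jacobiator_smul_mid (a : MvPolynomial (Fin n) K) (x y z : 𝔤) :
    jacobiator b x (a • y) z = a • jacobiator b x y z := by
  simp only [jacobiator_cycle hb z x, jacobiator_smul_right hb]

noncomputable def jacobiatorₗ :
    𝔤 →ₗ[MvPolynomial (Fin n) K] 𝔤 →ₗ[MvPolynomial (Fin n) K] 𝔤 →ₗ[MvPolynomial (Fin n) K] 𝔤 :=
  LinearMap.mk₂ _
    (fun x y => ⟨⟨jacobiator b x y, jacobiator_add_right x y⟩,
      fun a z => jacobiator_smul_right hb a x y z⟩)
    (fun x x' y => LinearMap.ext (jacobiator_add_left hb x x' y))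
    (fun a x y => LinearMap.ext (jacobiator_smul_left hb a x y))
    (fun x y y' => LinearMap.ext (jacobiator_add_mid hb x y y'))
    (fun a x y => LinearMap.ext (jacobiator_smul_mid hb a x y))

theorem jacobiator_mk_one_zero (x y : 𝔤) : jacobiator b x y (1, 0) = 0 := by
  have h (z : 𝔤) : gBracket K n b z (1, 0) = 0 := by
    refine Prod.ext ?_ (snd_mk_zero_right z 1)
    simp [gBracket, hb.map_one_right]
  simp only [jacobiator, h, zero_right, sub_zero]

theorem single_single (i j : Fin n) :
    gBracket K n b (0, Pi.single i 1) (0, Pi.single j 1) =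
      (0, fun k => pderiv k (b (X i) (X j))) := by
  refine Prod.ext ?_ (funext fun k => ?_)
  · simp [gBracket]
  · simp [gBracket, Pi.single_apply, apply_ite (b (X _)), hb.map_one_right]

theorem single_pderiv (i : Fin n) (f : MvPolynomial (Fin n) K) :
    gBracket K n b (0, Pi.single i 1) (0, fun k => pderiv k f) =
      (0, fun k => pderiv k (b (X i) f)) := by
  refine Prod.ext ?_ (funext fun k => ?_)
  · simp [gBracket]
  · simp [gBracket, Pi.single_apply, apply_ite (b (X _)), hb.map_one_right]
    exact (hb.pderiv_bracket_X k i f).symm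

theorem jacobiator_single (i j l : Fin n) :
    jacobiator b (0, Pi.single i 1) (0, Pi.single j 1) (0, Pi.single l 1) = 0 := by
  rw [jacobiator, single_single hb, single_single hb, single_single hb,
    swap hb (0, Pi.single l 1), single_pderiv hb, single_pderiv hb, single_pderiv hb]
  refine Prod.ext (by simp) (funext fun k => ?_)
  have h := congrArg (pderiv k) (hb.jacobi_cyclic (X i) (X j) (X l))
  rw [hb.skew (X i) (X l), map_neg] at h
  simp only [map_add, map_neg, map_zero] at h
  simp only [Prod.snd_sub, Prod.snd_neg, Pi.sub_apply, Pi.neg_apply, Prod.snd_zero,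
    Pi.zero_apply]
  linear_combination h

end

noncomputable def basis : Module.Basis (Unit ⊕ Fin n) (MvPolynomial (Fin n) K) 𝔤 :=
  (Module.Basis.singleton Unit _).prod (Pi.basisFun _ (Fin n))

theorem basis_inl (u : Unit) : (basis (Sum.inl u) : 𝔤) = (1, 0) := by
  simp [basis]

theorem basis_inr (i : Fin n) : (basis (Sum.inr i) : 𝔤) = (0, Pi.single i 1) := by
  simp [basis]

theorem jacobiator_eq_zero (hb : IsPoissonBracket K b) (x y z : 𝔤) : jacobiator b x y z = 0 := by
  have h : jacobiatorₗ hb = 0 := basis.ext fun α => basis.ext fun β => basis.ext fun γ => by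
    simp only [LinearMap.zero_apply, jacobiatorₗ, LinearMap.mk₂_apply, LinearMap.coe_mk,
      AddHom.coe_mk]
    rcases γ with ⟨⟩ | l
    · rw [basis_inl]
      exact jacobiator_mk_one_zero hb _ _
    rcases β with ⟨⟩ | j
    · rw [basis_inl, jacobiator_swap_right hb, jacobiator_mk_one_zero hb, neg_zero]
    rcases α with ⟨⟩ | i
    · rw [basis_inl, ← jacobiator_cycle hb, jacobiator_mk_one_zero hb]
    simp only [basis_inr]
    exact jacobiator_single hb i j l
  exact congr($h x y z)

end gBracket

/-- For a Poisson polynomial algebra `P_n = K[x₁,…,x_n]`, the free module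
`G' = P_n ⊕ ⨁_{i=1}^n P_n t_i` is a Lie algebra over `K` under `gBracket`, with `P_n`
an abelian Lie ideal. -/
theorem gBracket_lie_algebra (K : Type*) [Field K] (n : ℕ)
    (b : MvPolynomial (Fin n) K →ₗ[K] MvPolynomial (Fin n) K →ₗ[K] MvPolynomial (Fin n) K)
    (hb : IsPoissonBracket K b) :
    (∀ x y z, gBracket K n b (x + y) z = gBracket K n b x z + gBracket K n b y z) ∧
    (∀ x y z, gBracket K n b x (y + z) = gBracket K n b x y + gBracket K n b x z) ∧
    (∀ (c : K) x y, gBracket K n b (c • x) y = c • gBracket K n b x y) ∧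
    (∀ (c : K) x y, gBracket K n b x (c • y) = c • gBracket K n b x y) ∧
    (∀ m, gBracket K n b m m = 0) ∧
    (∀ x y z, gBracket K n b x (gBracket K n b y z) =
      gBracket K n b (gBracket K n b x y) z + gBracket K n b y (gBracket K n b x z)) ∧
    (∀ p p' : MvPolynomial (Fin n) K, gBracket K n b (p, 0) (p', 0) = 0) ∧
    (∀ m (p : MvPolynomial (Fin n) K), (gBracket K n b m (p, 0)).2 = 0) := by
  refine ⟨gBracket.add_left, gBracket.add_right, gBracket.smul_left, gBracket.smul_right,
    gBracket.self_eq_zero hb, fun x y z => ?_, gBracket.mk_zero_mk_zero,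
    gBracket.snd_mk_zero_right⟩
  have h := gBracket.jacobiator_eq_zero hb x y z
  rwa [gBracket.jacobiator, sub_sub, sub_eq_zero] at h
end

section
/- Let P be a Poisson algebra over an arbitrary field K such that the natural map π_P : U(P) → End_K(P) (sending p ∈ P to multiplication by p and δ_q to pad_q = {q,·}) has image P D(P), the algebra of Poisson differential operators on P. Then P D(P) is a simple ring if and only if P is Poisson simple, i.e., 0 and P are the only ideals I of P with {P, I} ⊆ I. -/
/-- The algebra `PD(P)` of Poisson differential operators on a Poisson algebra `P`:
the subalgebra of `End_K(P)` generated by the multiplication operators together with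
all Hamiltonian derivations `pad_a = {a, ·}`. -/
noncomputable def PoissonDiffOps (K P : Type*) [Field K] [CommRing P] [Algebra K P]
    (b : P →ₗ[K] P →ₗ[K] P) : Subalgebra K (Module.End K P) :=
  Algebra.adjoin K
    ((Set.range fun a : P => (Algebra.lmul K P a : Module.End K P)) ∪
      (Set.range fun a : P => (b a : Module.End K P)))

section

open Algebra

attribute [local instance] LieRing.ofAssociativeRing

theorem Ring.lie_mul {R : Type*} [Ring R] (a b c : R) :
    ⁅a, b * c⁆ = ⁅a, b⁆ * c + b * ⁅a, c⁆ := by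
  simp only [Ring.lie_def, mul_sub, sub_mul, mul_assoc]
  abel

theorem TwoSidedIdeal.lie_mem {R : Type*} [Ring R] (J : TwoSidedIdeal R) (a : R) {x : R}
    (hx : x ∈ J) : ⁅a, x⁆ ∈ J := by
  rw [Ring.lie_def]
  exact J.sub_mem (J.mul_mem_left a x hx) (J.mul_mem_right x a hx)

section DiffOps

variable {K P : Type*} [CommRing K] [CommRing P] [Algebra K P]

variable (K P) in
/-- The differential operators of order `< n` in Grothendieck's sense (so order `0` is level `1`):
the endomorphisms killed by `n` successive commutators with multiplication operators. -/
noncomputable def diffOpsBelow : ℕ → Submodule K (Module.End K P)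
  | 0 => ⊥
  | n + 1 => ⨅ p : P, (diffOpsBelow n).comap (LieAlgebra.ad K (Module.End K P) (lmul K P p))

@[simp]
theorem mem_diffOpsBelow_zero {D : Module.End K P} : D ∈ diffOpsBelow K P 0 ↔ D = 0 :=
  Submodule.mem_bot K (M := Module.End K P)

theorem mem_diffOpsBelow_succ {n : ℕ} {D : Module.End K P} :
    D ∈ diffOpsBelow K P (n + 1) ↔ ∀ p, ⁅lmul K P p, D⁆ ∈ diffOpsBelow K P n := by
  simp [diffOpsBelow]

theorem diffOpsBelow_mono : Monotone (diffOpsBelow K P) := by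
  refine monotone_nat_of_le_succ fun n => ?_
  induction n with
  | zero => exact bot_le
  | succ n ih =>
    exact fun D hD => mem_diffOpsBelow_succ.2 fun p => ih (mem_diffOpsBelow_succ.1 hD p)

theorem mul_mem_diffOpsBelow {m n : ℕ} {D E : Module.End K P}
    (hD : D ∈ diffOpsBelow K P m) (hE : E ∈ diffOpsBelow K P n) :
    D * E ∈ diffOpsBelow K P (m + n) := by
  induction m generalizing n D E with
  | zero => simp [mem_diffOpsBelow_zero.1 hD]
  | succ m ihm =>
    induction n generalizing E with
    | zero => simp [mem_diffOpsBelow_zero.1 hE]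
    | succ n ihn =>
      rw [← Nat.add_assoc, mem_diffOpsBelow_succ]
      intro p
      rw [Ring.lie_mul]
      refine add_mem ?_ (ihn (mem_diffOpsBelow_succ.1 hE p))
      rw [Nat.add_right_comm]
      exact ihm (mem_diffOpsBelow_succ.1 hD p) hE

theorem lmul_mem_diffOpsBelow_one (a : P) : lmul K P a ∈ diffOpsBelow K P 1 :=
  mem_diffOpsBelow_succ.2 fun p => by
    rw [Ring.lie_def, ← map_mul, ← map_mul, mul_comm, sub_self]
    exact zero_mem _

theorem eq_lmul_of_mem_diffOpsBelow_one {D : Module.End K P} (hD : D ∈ diffOpsBelow K P 1) :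
    D = lmul K P (D 1) := by
  ext y
  have hcomm := LinearMap.congr_fun (mem_diffOpsBelow_zero.1 (mem_diffOpsBelow_succ.1 hD y)) 1
  simp only [Ring.lie_def, LinearMap.sub_apply, Module.End.mul_apply, coe_lmul_eq_mul,
    LinearMap.mul_apply', mul_one, LinearMap.zero_apply, sub_eq_zero] at hcomm
  rw [coe_lmul_eq_mul, LinearMap.mul_apply', ← hcomm, mul_comm]

theorem lie_derivation_lmul (δ : Derivation K P P) (x : P) :
    ⁅(δ : Module.End K P), lmul K P x⁆ = lmul K P (δ x) := by
  ext y
  simp only [Ring.lie_def, LinearMap.sub_apply, Module.End.mul_apply, coe_lmul_eq_mul,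
    LinearMap.mul_apply', Derivation.coeFn_coe, Derivation.leibniz, smul_eq_mul]
  ring

theorem derivation_mem_diffOpsBelow_two (δ : Derivation K P P) :
    (δ : Module.End K P) ∈ diffOpsBelow K P 2 :=
  mem_diffOpsBelow_succ.2 fun p => by
    rw [← lie_skew, lie_derivation_lmul]
    exact neg_mem (lmul_mem_diffOpsBelow_one _)

end DiffOps

section DiffOpAlgebra

variable {K P : Type*} [CommRing K] [CommRing P] [Algebra K P] {ι : Type*}

noncomputable def diffOpAlgebra (δ : ι → Derivation K P P) : Subalgebra K (Module.End K P) :=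
  Algebra.adjoin K (Set.range (lmul K P : P → Module.End K P) ∪
    Set.range fun i => (δ i : Module.End K P))

theorem lmul_mem_diffOpAlgebra (δ : ι → Derivation K P P) (a : P) :
    lmul K P a ∈ diffOpAlgebra δ :=
  subset_adjoin (Or.inl ⟨a, rfl⟩)

theorem derivation_mem_diffOpAlgebra (δ : ι → Derivation K P P) (i : ι) :
    (δ i : Module.End K P) ∈ diffOpAlgebra δ :=
  subset_adjoin (Or.inr ⟨i, rfl⟩)

theorem exists_mem_diffOpsBelow_of_mem_diffOpAlgebra {δ : ι → Derivation K P P}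
    {D : Module.End K P} (hD : D ∈ diffOpAlgebra δ) : ∃ n, D ∈ diffOpsBelow K P n := by
  induction hD using adjoin_induction with
  | mem D hD =>
    rcases hD with ⟨a, rfl⟩ | ⟨i, rfl⟩
    · exact ⟨1, lmul_mem_diffOpsBelow_one a⟩
    · exact ⟨2, derivation_mem_diffOpsBelow_two (δ i)⟩
  | algebraMap r => exact ⟨1, (lmul K P).commutes r ▸ lmul_mem_diffOpsBelow_one _⟩
  | add D E _ _ hD hE =>
    obtain ⟨m, hm⟩ := hD
    obtain ⟨n, hn⟩ := hE
    exact ⟨max m n, add_mem (diffOpsBelow_mono (le_max_left m n) hm)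
      (diffOpsBelow_mono (le_max_right m n) hn)⟩
  | mul D E _ _ hD hE =>
    obtain ⟨m, hm⟩ := hD
    obtain ⟨n, hn⟩ := hE
    exact ⟨m + n, mul_mem_diffOpsBelow hm hn⟩

theorem mapsTo_of_mem_diffOpAlgebra {δ : ι → Derivation K P P} {I : Ideal P}
    (hI : ∀ i x, x ∈ I → δ i x ∈ I) {D : Module.End K P} (hD : D ∈ diffOpAlgebra δ) :
    ∀ x ∈ I, D x ∈ I := by
  induction hD using adjoin_induction with
  | mem D hD =>
    rcases hD with ⟨a, rfl⟩ | ⟨i, rfl⟩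
    · exact fun x hx => I.mul_mem_left a hx
    · exact hI i
  | algebraMap r =>
    intro x hx
    rw [Module.algebraMap_end_apply, Algebra.smul_def]
    exact I.mul_mem_left _ hx
  | add D E _ _ hD hE => exact fun x hx => add_mem (hD x hx) (hE x hx)
  | mul D E _ _ hD hE => exact fun x hx => hD _ (hE x hx)

end DiffOpAlgebra

section Ideals

variable {K : Type*} [CommRing K]

def Subalgebra.idealRangeLE {M : Type*} [AddCommGroup M] [Module K M]
    (A : Subalgebra K (Module.End K M)) (N : Submodule K M) (hN : ∀ D ∈ A, ∀ x ∈ N, D x ∈ N) :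
    TwoSidedIdeal A :=
  .mk' {D | ∀ x, (D : Module.End K M) x ∈ N} (fun _ => N.zero_mem)
    (fun hD hE x => N.add_mem (hD x) (hE x)) (fun hD x => N.neg_mem (hD x))
    (fun {D} _ hE x => hN D D.2 _ (hE x)) (fun hD _ => hD _)

variable {P : Type*} [CommRing P] [Algebra K P]
  {A : Subalgebra K (Module.End K P)}

theorem eq_bot_or_eq_top_of_isSimpleRing_of_stable [IsSimpleRing A] (hA : ∀ a, lmul K P a ∈ A)
    {I : Ideal P} (hI : ∀ D ∈ A, ∀ x ∈ I, D x ∈ I) : I = ⊥ ∨ I = ⊤ := by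
  let J := A.idealRangeLE (I.restrictScalars K) hI
  rcases IsSimpleRing.simple.eq_bot_or_eq_top J with hJ | hJ
  · refine .inl ((Submodule.eq_bot_iff I).2 fun x hx => ?_)
    have hxJ : (lmul K P).codRestrict A hA x ∈ J :=
      (TwoSidedIdeal.mem_mk' _ _ _ _ _ _ _).2 fun p => I.mul_mem_right p hx
    rw [hJ, TwoSidedIdeal.mem_bot] at hxJ
    simpa using congr(($hxJ : Module.End K P) 1)
  · have h1 : (1 : A) ∈ J := hJ ▸ trivial
    exact .inr ((Ideal.eq_top_iff_one I).2 ((TwoSidedIdeal.mem_mk' _ _ _ _ _ _ _).1 h1 1))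

theorem exists_ne_zero_lmul_mem (hA : ∀ a, lmul K P a ∈ A) {J : TwoSidedIdeal A} {n : ℕ}
    {D : A} (hDJ : D ∈ J) (hD : D ≠ 0) (hDn : (D : Module.End K P) ∈ diffOpsBelow K P n) :
    ∃ x ≠ 0, (lmul K P).codRestrict A hA x ∈ J := by
  induction n generalizing D with
  | zero => exact absurd (Subtype.ext (mem_diffOpsBelow_zero.1 hDn)) hD
  | succ n ih =>
    by_cases hD1 : (D : Module.End K P) ∈ diffOpsBelow K P 1
    · have hDx : (lmul K P).codRestrict A hA ((D : Module.End K P) 1) = D :=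
        Subtype.ext (eq_lmul_of_mem_diffOpsBelow_one hD1).symm
      refine ⟨(D : Module.End K P) 1, fun h => hD ?_, by rwa [hDx]⟩
      rw [← hDx, h, map_zero]
    · obtain ⟨p, hp⟩ : ∃ p, ⁅lmul K P p, (D : Module.End K P)⁆ ≠ 0 := by
        simpa [mem_diffOpsBelow_succ] using hD1
      exact ih (J.lie_mem ((lmul K P).codRestrict A hA p) hDJ)
        (fun h => hp congr(Subtype.val $h)) (mem_diffOpsBelow_succ.1 hDn p)

theorem derivation_mem_comap_lmul (hA : ∀ a, lmul K P a ∈ A) (J : TwoSidedIdeal A)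
    (δ : Derivation K P P) (hδ : (δ : Module.End K P) ∈ A) {x : P}
    (hx : x ∈ (J.comap ((lmul K P).codRestrict A hA)).asIdeal) :
    δ x ∈ (J.comap ((lmul K P).codRestrict A hA)).asIdeal := by
  rw [TwoSidedIdeal.mem_asIdeal, TwoSidedIdeal.mem_comap] at hx ⊢
  have hbracket :
      (lmul K P).codRestrict A hA (δ x) = ⁅(⟨δ, hδ⟩ : A), (lmul K P).codRestrict A hA x⁆ :=
    Subtype.ext (lie_derivation_lmul δ x).symm
  exact hbracket ▸ J.lie_mem _ hx

end Ideals

theorem isSimpleRing_diffOpAlgebra {K P ι : Type*} [CommRing K] [CommRing P] [Nontrivial P]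
    [Algebra K P] {δ : ι → Derivation K P P}
    (hδ : ∀ I : Ideal P, (∀ i x, x ∈ I → δ i x ∈ I) → I = ⊥ ∨ I = ⊤) :
    IsSimpleRing (diffOpAlgebra δ) := by
  refine .of_eq_bot_or_eq_top fun J => or_iff_not_imp_left.2 fun hJ => ?_
  obtain ⟨D, hDJ, hD⟩ : ∃ D ∈ J, D ≠ 0 := by
    by_contra! h
    exact hJ (eq_bot_iff.2 fun D hD => (TwoSidedIdeal.mem_bot _).2 (h D hD))
  have hA := lmul_mem_diffOpAlgebra δ
  obtain ⟨n, hn⟩ := exists_mem_diffOpsBelow_of_mem_diffOpAlgebra D.2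
  obtain ⟨x, hx, hxJ⟩ := exists_ne_zero_lmul_mem hA hDJ hD hn
  set I := (J.comap ((lmul K P).codRestrict _ hA)).asIdeal
  rcases hδ I fun i y => derivation_mem_comap_lmul hA J (δ i) (derivation_mem_diffOpAlgebra δ i)
    with hI | hI
  · have hxI : x ∈ I := by rwa [TwoSidedIdeal.mem_asIdeal, TwoSidedIdeal.mem_comap]
    exact absurd ((Submodule.eq_bot_iff I).1 hI x hxI) hx
  · have h1 : (1 : P) ∈ I := hI ▸ Submodule.mem_top
    rw [TwoSidedIdeal.mem_asIdeal, TwoSidedIdeal.mem_comap, map_one] at h1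
    exact J.one_mem_iff.1 h1

theorem isSimpleRing_diffOpAlgebra_iff {K P ι : Type*} [CommRing K] [CommRing P] [Nontrivial P]
    [Algebra K P] (δ : ι → Derivation K P P) :
    IsSimpleRing (diffOpAlgebra δ) ↔
      ∀ I : Ideal P, (∀ i x, x ∈ I → δ i x ∈ I) → I = ⊥ ∨ I = ⊤ :=
  ⟨fun _ _ hI => eq_bot_or_eq_top_of_isSimpleRing_of_stable (lmul_mem_diffOpAlgebra δ)
    fun _ hD => mapsTo_of_mem_diffOpAlgebra hI hD, isSimpleRing_diffOpAlgebra⟩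

end

def IsPoissonBracket.hamiltonian_s18 {K P : Type*} [Field K] [CommRing P] [Algebra K P]
    {b : P →ₗ[K] P →ₗ[K] P} (hb : IsPoissonBracket K b) (a : P) : Derivation K P P :=
  Derivation.mk' (b a) fun x y => by rw [hb.2.2, smul_eq_mul, smul_eq_mul]; ring

theorem poissonDiffOps_eq_diffOpAlgebra {K P : Type*} [Field K] [CommRing P] [Algebra K P]
    {b : P →ₗ[K] P →ₗ[K] P} (hb : IsPoissonBracket K b) :
    PoissonDiffOps K P b = diffOpAlgebra hb.hamiltonian_s18 :=
  rfl

/-- Simplicity criterion: the algebra `PD(P)` of Poisson differential operators is a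
simple ring iff the Poisson algebra `P` is Poisson simple, i.e. `0` and `P` are the
only Poisson ideals of `P`. -/
theorem poissonDiffOps_simple_iff (K P : Type*) [Field K] [CommRing P] [Nontrivial P]
    [Algebra K P] (b : P →ₗ[K] P →ₗ[K] P) (hb : IsPoissonBracket K b) :
    IsSimpleRing (PoissonDiffOps K P b) ↔
      ∀ I : Ideal P, (∀ p x : P, x ∈ I → b p x ∈ I) → I = ⊥ ∨ I = ⊤ := by
  rw [poissonDiffOps_eq_diffOpAlgebra hb]
  exact isSimpleRing_diffOpAlgebra_iff hb.hamiltonian_s18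
end
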